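/- For the matrix A^{(λ,n,d)} with entries a_{i,j} = 1 iff |⌈i/λ⌉ − ⌈j/λ⌉| ≤ d, the permanent satisfies per(A^{(λ,n,d)}) = (λ!)^m · V_∞(λ, n, d); in particular per(A^{(2,8,1)}) for the displayed 8×8 matrix equals 2^4 · V_∞(2,8,1). -/

import Mathlib

open scoped Classical

/-- `π` is a frequency permutation over `{1,…,m}` (represented 0-based as `Fin m`)
of length `n = m*lam`, i.e. each symbol appears exactly `lam` times. -/
def isFreqPerm (m lam : ℕ) (π : Fin (m * lam) → Fin m) : Prop :=
  ∀ k : Fin m, (Finset.univ.filter (fun i => π i = k)).card = lam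

noncomputable def FPset (m lam : ℕ) : Finset (Fin (m * lam) → Fin m) :=
  Finset.univ.filter (isFreqPerm m lam)

/-- Chebyshev distance `max_i |x_i - y_i|`. -/
def cheb {n m : ℕ} (x y : Fin n → Fin m) : ℕ :=
  Finset.univ.sup fun i => Nat.dist (x i).val (y i).val

/-- The identity frequency permutation `e_i = ⌈i/λ⌉` (0-based: `e_i = i / λ`). -/
def ident (m lam : ℕ) : Fin (m * lam) → Fin m := fun i =>
  ⟨i.val / lam, Nat.div_lt_of_lt_mul (lt_of_lt_of_eq i.isLt (Nat.mul_comm m lam))⟩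

/-- Ball of radius `d` centered at `π` inside `S_n^λ` under Chebyshev distance. -/
noncomputable def ball (m lam d : ℕ) (π : Fin (m * lam) → Fin m) :
    Finset (Fin (m * lam) → Fin m) :=
  (FPset m lam).filter fun ρ => cheb ρ π ≤ d

noncomputable def Vinf (m lam d : ℕ) : ℕ := (ball m lam d (ident m lam)).card

/-- The permanent of a square matrix. -/
def perMat {n : ℕ} (A : Matrix (Fin n) (Fin n) ℕ) : ℕ :=
  ∑ σ : Equiv.Perm (Fin n), ∏ i, A i (σ i)

/-- The 0-1 matrix `A^{(λ,n,d)}` with `a_{i,j} = 1` iff `|⌈i/λ⌉ - ⌈j/λ⌉| ≤ d`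
(indices 0-based, so `⌈i/λ⌉` becomes `i/λ + 1`). -/
def Amat (m lam d : ℕ) : Matrix (Fin (m * lam)) (Fin (m * lam)) ℕ :=
  fun i j => if Nat.dist (i.val / lam) (j.val / lam) ≤ d then 1 else 0

/-! Expanding the permanent of the 0-1 matrix counts the permutations `σ` with
`|⌈i/λ⌉ - ⌈σ(i)/λ⌉| ≤ d` for all `i`. Composing with the block map `i ↦ ⌈i/λ⌉` sends
these onto the frequency permutations in the Chebyshev ball of radius `d` around the
identity, and each fibre is a coset of the stabiliser of the block map, the product of the
symmetric groups of the `m` blocks, of order `(λ!)^m`. -/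

open Finset Equiv
open scoped Nat

section PermutationsAlongFibers

variable {α ι : Type*} [Fintype α] [DecidableEq α] [Fintype ι] [DecidableEq ι]

theorem card_perm_comp_eq_of_card_fiber_eq {f g : α → ι}
    (h : ∀ k, Fintype.card {a // g a = k} = Fintype.card {a // f a = k}) :
    Fintype.card {σ : Perm α // f ∘ σ = g} = ∏ k, (Fintype.card {a // f a = k})! := by
  obtain ⟨τ, rfl⟩ : ∃ τ : Perm α, f ∘ τ = g :=
    ⟨ofFiberEquiv fun k => Fintype.equivOfCardEq (h k), funext (ofFiberEquiv_map _)⟩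
  rw [← DomMulAct.stabilizer_card f]
  refine Fintype.card_congr ((Equiv.mulRight τ⁻¹).subtypeEquiv fun σ => ?_)
  simp only [coe_mulRight, Perm.coe_mul, funext_iff, Function.comp_apply]
  exact ⟨fun h a => by simpa using h (τ⁻¹ a), fun h a => by simpa using h (τ a)⟩

theorem card_filter_comp_mem (f : α → ι) (S : Finset (α → ι))
    (hS : ∀ g ∈ S, ∀ k, Fintype.card {a // g a = k} = Fintype.card {a // f a = k}) :
    #{σ : Perm α | f ∘ σ ∈ S} = (∏ k, (Fintype.card {a // f a = k})!) * #S := by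
  rw [card_eq_sum_card_fiberwise (f := fun σ : Perm α => f ∘ σ) (t := S)
    (fun σ hσ => by simpa using hσ), sum_const_nat fun g hg => ?_, mul_comm]
  rw [filter_filter, ← card_perm_comp_eq_of_card_fiber_eq (hS g hg), Fintype.card_subtype]
  congr 1
  ext σ
  simp only [mem_filter, mem_univ, true_and, and_iff_right_iff_imp]
  rintro rfl
  exact hg

end PermutationsAlongFibers

section FrequencyPermutations

variable {m lam d : ℕ}

theorem ident_finProdFinEquiv (p : Fin m × Fin lam) : ident m lam (finProdFinEquiv p) = p.1 := by
  have hlam : 0 < lam := p.2.pos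
  ext
  simp [ident, finProdFinEquiv, Nat.add_mul_div_left _ _ hlam, Nat.div_eq_of_lt p.2.isLt]

theorem card_fiber_ident (k : Fin m) : Fintype.card {i // ident m lam i = k} = lam := by
  rw [← Fintype.card_congr (finProdFinEquiv.subtypeEquiv fun p => by rw [ident_finProdFinEquiv]),
    Fintype.card_congr (prodSubtypeFstEquivSubtypeProd (p := (· = k)))]
  simp

theorem isFreqPerm_iff {π : Fin (m * lam) → Fin m} :
    isFreqPerm m lam π ↔ ∀ k, Fintype.card {i // π i = k} = lam := by
  simp only [isFreqPerm, Fintype.card_subtype]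

theorem ident_comp_perm_mem_FPset (σ : Perm (Fin (m * lam))) :
    ident m lam ∘ σ ∈ FPset m lam := by
  simp only [FPset, mem_filter, mem_univ, true_and, isFreqPerm_iff]
  intro k
  exact (Fintype.card_congr (σ.subtypeEquiv fun _ => Iff.rfl)).trans (card_fiber_ident k)

theorem cheb_le_iff {n : ℕ} {x y : Fin n → Fin m} :
    cheb x y ≤ d ↔ ∀ i, Nat.dist (x i) (y i) ≤ d := by
  simp [cheb]

end FrequencyPermutations

theorem perMat_boole {n : ℕ} (R : Fin n → Fin n → Prop) [DecidableRel R] :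
    perMat (fun i j => if R i j then 1 else 0) = #{σ : Perm (Fin n) | ∀ i, R i (σ i)} := by
  simp [perMat, prod_boole]

theorem perMat_Amat (m lam d : ℕ) :
    perMat (Amat m lam d) = lam ! ^ m * Vinf m lam d := by
  have hball : ∀ σ : Perm (Fin (m * lam)),
      ident m lam ∘ σ ∈ ball m lam d (ident m lam) ↔
        ∀ i, Nat.dist (i.val / lam) ((σ i).val / lam) ≤ d := by
    intro σ
    simp only [ball, mem_filter, ident_comp_perm_mem_FPset, true_and, cheb_le_iff, Nat.dist_comm]
    rfl
  unfold Amat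
  rw [perMat_boole, ← filter_congr fun σ _ => hball σ, card_filter_comp_mem]
  · simp [card_fiber_ident, Vinf]
  · intro g hg k
    simp only [ball, FPset, mem_filter, mem_univ, true_and, isFreqPerm_iff] at hg
    rw [hg.1 k, card_fiber_ident]

theorem permanent_eq_factorial_mul_Vinf_general (m lam d : ℕ) :
    perMat (Amat m lam d) = (Nat.factorial lam) ^ m * Vinf m lam d ∧
    perMat (Amat 4 2 1) = 2 ^ 4 * Vinf 4 2 1 :=
  ⟨perMat_Amat m lam d, perMat_Amat 4 2 1⟩

theorem permanent_eq_factorial_mul_Vinf (m lam d : ℕ) (hlam : 0 < lam) :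
    perMat (Amat m lam d) = (Nat.factorial lam) ^ m * Vinf m lam d ∧
    perMat (Amat 4 2 1) = 2 ^ 4 * Vinf 4 2 1 :=
  permanent_eq_factorial_mul_Vinf_general m lam d
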